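/- The regularized optimal value converges to the true optimal transport cost: as ε → ∞, min_{P ∈ Π(a,b)} [⟨P,M⟩ − (1/ε)h(P)] converges to w* = min_{P ∈ Π(a,b)} ⟨P,M⟩, with the difference bounded by (1 + log(nm))/ε. -/

import Mathlib

open scoped BigOperators

/-- Per-term nonnegativity of the entropy contribution for `p ∈ [0,1]`. -/
lemma ent_term_nonneg (p : ℝ) (h0 : 0 ≤ p) (h1 : p ≤ 1) :
    0 ≤ p * (1 - Real.log p) := by
  rcases eq_or_lt_of_le h0 with h | h
  · simp [← h]
  · have hlog : Real.log p ≤ 0 := Real.log_nonpos (le_of_lt h) h1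
    nlinarith

/-- Per-term upper bound: `p (1 - log p) ≤ p log c + 1/c` for `c > 0`, `p ≥ 0`. -/
lemma ent_term_le (c p : ℝ) (hc : 0 < c) (h0 : 0 ≤ p) :
    p * (1 - Real.log p) ≤ p * Real.log c + 1 / c := by
  rcases eq_or_lt_of_le h0 with h | hp
  · simp [← h]
    positivity
  · have ht : (0:ℝ) < 1 / (c * p) := by positivity
    have hlog : Real.log (1 / (c * p)) ≤ 1 / (c * p) - 1 :=
      Real.log_le_sub_one_of_pos ht
    have hlog' : Real.log (1 / (c * p)) = - Real.log c - Real.log p := by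
      rw [one_div, Real.log_inv, Real.log_mul (ne_of_gt hc) (ne_of_gt hp)]
      ring
    rw [hlog'] at hlog
    have := mul_le_mul_of_nonneg_left hlog (le_of_lt hp)
    have hcp : p * (1 / (c * p) - 1) = 1 / c - p := by
      field_simp
    rw [hcp] at this
    nlinarith

/-- The entropy-regularized optimal value converges to the true optimal transport cost
as `ε → ∞`, with the difference bounded by `(1 + log(nm))/ε`. -/
theorem regularized_value_converges_to_ot_cost
    {n m : ℕ} (a : Fin n → ℝ) (b : Fin m → ℝ)
    (ha0 : ∀ i, 0 ≤ a i) (ha1 : ∑ i, a i = 1)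
    (hb0 : ∀ j, 0 ≤ b j) (hb1 : ∑ j, b j = 1)
    (M : Matrix (Fin n) (Fin m) ℝ) :
    (∀ ε > (0 : ℝ),
      |sInf ((fun P : Matrix (Fin n) (Fin m) ℝ =>
            (∑ i, ∑ j, P i j * M i j)
              - (1 / ε) * ∑ i, ∑ j, P i j * (1 - Real.log (P i j))) ''
          {P | (∀ i j, 0 ≤ P i j) ∧ (∀ i, ∑ j, P i j = a i) ∧ (∀ j, ∑ i, P i j = b j)})
        - sInf ((fun P : Matrix (Fin n) (Fin m) ℝ => ∑ i, ∑ j, P i j * M i j) ''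
          {P | (∀ i j, 0 ≤ P i j) ∧ (∀ i, ∑ j, P i j = a i) ∧ (∀ j, ∑ i, P i j = b j)})|
        ≤ (1 + Real.log (n * m)) / ε)
    ∧ Filter.Tendsto
        (fun ε : ℝ =>
          sInf ((fun P : Matrix (Fin n) (Fin m) ℝ =>
              (∑ i, ∑ j, P i j * M i j)
                - (1 / ε) * ∑ i, ∑ j, P i j * (1 - Real.log (P i j))) ''
            {P | (∀ i j, 0 ≤ P i j) ∧ (∀ i, ∑ j, P i j = a i) ∧ (∀ j, ∑ i, P i j = b j)}))
        Filter.atTop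
        (nhds (sInf ((fun P : Matrix (Fin n) (Fin m) ℝ => ∑ i, ∑ j, P i j * M i j) ''
          {P | (∀ i j, 0 ≤ P i j) ∧ (∀ i, ∑ j, P i j = a i) ∧ (∀ j, ∑ i, P i j = b j)}))) := by
  classical
  set S : Set (Matrix (Fin n) (Fin m) ℝ) :=
    {P | (∀ i j, 0 ≤ P i j) ∧ (∀ i, ∑ j, P i j = a i) ∧ (∀ j, ∑ i, P i j = b j)} with hS
  set f : Matrix (Fin n) (Fin m) ℝ → ℝ := fun P => ∑ i, ∑ j, P i j * M i j with hf
  set h : Matrix (Fin n) (Fin m) ℝ → ℝ :=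
    fun P => ∑ i, ∑ j, P i j * (1 - Real.log (P i j)) with hh
  set C : ℝ := 1 + Real.log (n * m) with hC
  -- n, m positive
  have hn : 0 < n := by
    by_contra hn
    push_neg at hn
    interval_cases n
    simp at ha1
  have hm : 0 < m := by
    by_contra hm
    push_neg at hm
    interval_cases m
    simp at hb1
  have hnm : (0:ℝ) < (n:ℝ) * m := by positivity
  have hnm1 : (1:ℝ) ≤ (n:ℝ) * m := by
    have : (1:ℝ) ≤ (n:ℝ) := by exact_mod_cast hn
    have : (1:ℝ) ≤ (m:ℝ) := by exact_mod_cast hm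
    nlinarith [show (1:ℝ) ≤ (n:ℝ) from by exact_mod_cast hn]
  have hCpos : 0 < C := by
    have : 0 ≤ Real.log ((n:ℝ) * m) := Real.log_nonneg hnm1
    rw [hC]; linarith
  -- S is nonempty
  have hSne : S.Nonempty := by
    refine ⟨fun i j => a i * b j, ?_, ?_, ?_⟩
    · intro i j; exact mul_nonneg (ha0 i) (hb0 j)
    · intro i; rw [← Finset.mul_sum, hb1, mul_one]
    · intro j
      simp only
      rw [← Finset.sum_mul, ha1, one_mul]
  -- entries of P ∈ S lie in [0,1]
  have hmem : ∀ P ∈ S, ∀ i j, 0 ≤ P i j ∧ P i j ≤ 1 := by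
    rintro P ⟨h0, hrow, _⟩ i j
    refine ⟨h0 i j, ?_⟩
    have h1 : P i j ≤ ∑ j', P i j' :=
      Finset.single_le_sum (fun j' _ => h0 i j') (Finset.mem_univ j)
    have h2 : a i ≤ ∑ i', a i' :=
      Finset.single_le_sum (fun i' _ => ha0 i') (Finset.mem_univ i)
    rw [hrow i] at h1
    rw [ha1] at h2
    linarith
  -- total mass is 1
  have htot : ∀ P ∈ S, ∑ i, ∑ j, P i j = 1 := by
    rintro P ⟨_, hrow, _⟩
    calc ∑ i, ∑ j, P i j = ∑ i, a i := by
          exact Finset.sum_congr rfl fun i _ => hrow i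
      _ = 1 := ha1
  -- entropy bounds
  have hent0 : ∀ P ∈ S, 0 ≤ h P := by
    intro P hP
    apply Finset.sum_nonneg; intro i _
    apply Finset.sum_nonneg; intro j _
    exact ent_term_nonneg _ (hmem P hP i j).1 (hmem P hP i j).2
  have hentC : ∀ P ∈ S, h P ≤ C := by
    intro P hP
    have hstep : h P ≤ ∑ i, ∑ j, (P i j * Real.log ((n:ℝ)*m) + 1 / ((n:ℝ)*m)) := by
      apply Finset.sum_le_sum; intro i _
      apply Finset.sum_le_sum; intro j _
      exact ent_term_le _ _ hnm (hmem P hP i j).1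
    have hsplit : ∑ i, ∑ j, (P i j * Real.log ((n:ℝ)*m) + 1 / ((n:ℝ)*m))
        = (∑ i, ∑ j, P i j) * Real.log ((n:ℝ)*m) + (n:ℝ) * m * (1 / ((n:ℝ)*m)) := by
      simp [Finset.sum_add_distrib, ← Finset.sum_mul, Finset.mul_sum]
      ring
    rw [hsplit, htot P hP, one_mul, mul_one_div, div_self (ne_of_gt hnm)] at hstep
    rw [hC]; linarith
  -- lower bound for f on S
  set B : ℝ := -∑ i, ∑ j, |M i j| with hB
  have hfB : ∀ P ∈ S, B ≤ f P := by
    intro P hP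
    rw [hB, hf, neg_le, ← Finset.sum_neg_distrib]
    apply Finset.sum_le_sum; intro i _
    rw [← Finset.sum_neg_distrib]
    apply Finset.sum_le_sum; intro j _
    have h01 := hmem P hP i j
    have := abs_nonneg (M i j)
    nlinarith [neg_abs_le (M i j), le_abs_self (M i j)]
  -- set up the images
  set L : ℝ := sInf (f '' S) with hL
  have hfbdd : BddBelow (f '' S) := by
    refine ⟨B, ?_⟩
    rintro y ⟨P, hP, rfl⟩
    exact hfB P hP
  have hfne : (f '' S).Nonempty := hSne.image f
  -- key sandwich, for each ε > 0
  have key : ∀ ε : ℝ, 0 < ε →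
      L - C / ε ≤ sInf ((fun P : Matrix (Fin n) (Fin m) ℝ =>
            (∑ i, ∑ j, P i j * M i j)
              - (1 / ε) * ∑ i, ∑ j, P i j * (1 - Real.log (P i j))) '' S) ∧
      sInf ((fun P : Matrix (Fin n) (Fin m) ℝ =>
            (∑ i, ∑ j, P i j * M i j)
              - (1 / ε) * ∑ i, ∑ j, P i j * (1 - Real.log (P i j))) '' S) ≤ L := by
    intro ε hε
    have hgbdd : BddBelow ((fun P : Matrix (Fin n) (Fin m) ℝ =>
            (∑ i, ∑ j, P i j * M i j)
              - (1 / ε) * ∑ i, ∑ j, P i j * (1 - Real.log (P i j))) '' S) := by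
      refine ⟨B - C / ε, ?_⟩
      rintro y ⟨P, hP, rfl⟩
      have h1 := hentC P hP
      have h2 := hfB P hP
      have h3 : (1/ε) * h P ≤ (1/ε) * C :=
        mul_le_mul_of_nonneg_left h1 (by positivity)
      have h4 : (1/ε) * C = C / ε := by ring
      show B - C / ε ≤ f P - (1/ε) * h P
      rw [← h4]
      linarith
    constructor
    · apply le_csInf (hSne.image _)
      rintro y ⟨P, hP, rfl⟩
      have h1 : L ≤ f P := csInf_le hfbdd ⟨P, hP, rfl⟩
      have h2 := hentC P hP
      have h3 : (1/ε) * h P ≤ C / ε := by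
        rw [div_eq_mul_inv C ε, mul_comm C ε⁻¹, ← one_div]
        exact mul_le_mul_of_nonneg_left h2 (by positivity)
      show L - C / ε ≤ f P - (1/ε) * h P
      linarith
    · apply le_csInf hfne
      rintro y ⟨P, hP, rfl⟩
      have h1 : sInf ((fun P : Matrix (Fin n) (Fin m) ℝ =>
            (∑ i, ∑ j, P i j * M i j)
              - (1 / ε) * ∑ i, ∑ j, P i j * (1 - Real.log (P i j))) '' S)
          ≤ f P - (1/ε) * h P :=
        csInf_le hgbdd ⟨P, hP, rfl⟩
      have h2 := hent0 P hP
      have h3 : 0 ≤ (1/ε) * h P := mul_nonneg (by positivity) h2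
      linarith
  constructor
  · intro ε hε
    obtain ⟨k1, k2⟩ := key ε hε
    have h0 : 0 ≤ C / ε := by positivity
    rw [abs_le]
    exact ⟨by linarith, by linarith⟩
  · rw [← tendsto_sub_nhds_zero_iff]
    apply squeeze_zero_norm' (a := fun ε : ℝ => C / ε)
    · filter_upwards [Filter.eventually_gt_atTop (0:ℝ)] with ε hε
      obtain ⟨k1, k2⟩ := key ε hε
      have h0 : 0 ≤ C / ε := by positivity
      rw [Real.norm_eq_abs, abs_le]
      exact ⟨by linarith, by linarith⟩
    · exact Filter.Tendsto.div_atTop tendsto_const_nhds Filter.tendsto_id
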